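/- Let k be a commutative ring, G a finite group, H ≤ G a subgroup, V a k-linear representation of H, and n ∈ ℕ. Regard H ≀ Σ_n as a subgroup of G ≀ Σ_n via the coordinatewise inclusion of H in G on the base. Then there is an isomorphism of k-linear (G ≀ Σ_n)-representations Ind_{H ≀ Σ_n}^{G ≀ Σ_n} (V^{⊗ n}) ≅ (Ind_H^G V)^{⊗ n}, where H ≀ Σ_n acts on V^{⊗ n} and G ≀ Σ_n acts on (Ind_H^G V)^{⊗ n} by the wreath tensor-power actions. (This is the paper's Lemma asserting that induction commutes with the k-th power operation, specialized to a point.) -/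

import Mathlib

/-!
Choosing coset representatives identifies `Ind_H^G V` with `⨁_{c ∈ G/H} V`. The same choice,
made coordinatewise, is a choice of representatives for `H ≀ Σ_n` in `G ≀ Σ_n`, with coset space
`(G/H)^n`; so, since tensor powers distribute over direct sums, both sides of the theorem are
identified with `⨁_{p ∈ (G/H)^n} V^{⊗n}`. The resulting linear isomorphism sends
`[w ⊗ ⨂ vᵢ]` to `w • ⨂ [1 ⊗ vᵢ]`, which makes it equivariant.
-/

open Equiv TensorProduct PiTensorProduct DirectSum

/-- The action of `Perm I` on `I → G` by `(σ • g) i = g (σ⁻¹ i)`. -/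
def permAut (G : Type*) [Group G] (I : Type*) : Equiv.Perm I →* MulAut (I → G) where
  toFun σ :=
    { toFun := fun g => g ∘ σ.symm
      invFun := fun g => g ∘ σ
      left_inv := fun g => by funext i; simp
      right_inv := fun g => by funext i; simp
      map_mul' := fun g h => rfl }
  map_one' := by ext g i; rfl
  map_mul' := fun σ τ => by ext g i; rfl

/-- The wreath product `G ≀ Σ(I)`. -/
abbrev Wreath (G : Type*) [Group G] (I : Type*) :=
  (I → G) ⋊[permAut G I] Equiv.Perm I

/-- The wreath tensor-power representation of `G ≀ Σ(I)` on `⨂ (i : I), V`: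
the base `I → G` acts factorwise and `Perm I` permutes the tensor factors. -/
noncomputable def wreathRep (R : Type*) [CommRing R] {G : Type*} [Group G] (I : Type*)
    {V : Type*} [AddCommGroup V] [Module R V] (ρ : Representation R G V) :
    Representation R (Wreath G I) (⨂[R] _i : I, V) where
  toFun w :=
    (PiTensorProduct.map fun i => ρ (w.left i)).comp
      (PiTensorProduct.reindex R (fun _ : I => V) w.right).toLinearMap
  map_one' := by
    ext v
    simp [Equiv.Perm.one_def]
  map_mul' := fun w₁ w₂ => by
    ext v
    simp [permAut, SemidirectProduct.mul_left, SemidirectProduct.mul_right,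
      Equiv.Perm.mul_apply, Equiv.Perm.inv_def, Equiv.Perm.mul_def]

section Ind

variable (k : Type*) [CommRing k] {H G : Type*} [Group H] [Group G] (f : H →* G)
  (V : Type*) [AddCommGroup V] [Module k V] (ρ : Representation k H V)

/-- The submodule of relations defining the balanced tensor product
`MonoidAlgebra k G ⊗[MonoidAlgebra k H] V`. -/
noncomputable def indRel : Submodule k (MonoidAlgebra k G ⊗[k] V) :=
  Submodule.span k {x | ∃ (a : MonoidAlgebra k G) (h : H) (v : V),
    x = (a * MonoidAlgebra.of k G (f h)) ⊗ₜ[k] v - a ⊗ₜ[k] (ρ h v)}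

/-- The induced representation `Ind_H^G V = MonoidAlgebra k G ⊗_{MonoidAlgebra k H} V`,
realized as the quotient of `MonoidAlgebra k G ⊗[k] V` by the balancing relations. -/
abbrev Ind : Type _ := (MonoidAlgebra k G ⊗[k] V) ⧸ indRel k f V ρ

theorem indRel_le_comap (g : G) :
    indRel k f V ρ ≤ (indRel k f V ρ).comap
      (LinearMap.rTensor V (LinearMap.mulLeft k (MonoidAlgebra.of k G g))) := by
  rw [indRel, Submodule.span_le]
  rintro x ⟨a, h, v, rfl⟩
  simp only [SetLike.mem_coe, Submodule.mem_comap, map_sub, LinearMap.rTensor_tmul,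
    LinearMap.mulLeft_apply]
  rw [← mul_assoc]
  exact Submodule.subset_span ⟨MonoidAlgebra.of k G g * a, h, v, rfl⟩

/-- The `G`-action on `Ind_H^G V` by left multiplication on the first factor. -/
noncomputable def indRep : Representation k G (Ind k f V ρ) where
  toFun g := Submodule.mapQ _ _
      (LinearMap.rTensor V (LinearMap.mulLeft k (MonoidAlgebra.of k G g)))
      (indRel_le_comap k f V ρ g)
  map_one' := by
    apply LinearMap.ext
    intro x
    induction x using Submodule.Quotient.induction_on with
    | _ y =>
      simp [Submodule.mapQ_apply, ← MonoidAlgebra.one_def, LinearMap.mulLeft_one]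
  map_mul' := fun g₁ g₂ => by
    apply LinearMap.ext
    intro x
    induction x using Submodule.Quotient.induction_on with
    | _ y =>
      simp only [Submodule.mapQ_apply, _root_.map_mul, LinearMap.mulLeft_mul,
        LinearMap.rTensor_comp, LinearMap.comp_apply, Module.End.mul_apply]

end Ind

/-- The coordinatewise inclusion `H ≀ Σ(I) → G ≀ Σ(I)` induced by `f : H →* G`. -/
def wreathMap {H G : Type*} [Group H] [Group G] (f : H →* G) (I : Type*) :
    Wreath H I →* Wreath G I where
  toFun w := ⟨⇑f ∘ w.left, w.right⟩
  map_one' := by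
    ext i
    · simp
    · simp
  map_mul' := fun a b => by
    ext i
    · simp [permAut, -SemidirectProduct.mk_eq_inl_mul_inr]
      rfl
    · simp

/-- `C` plays the role of `G ⧸ f(H)` and `rep` is a transversal of the left cosets of `f(H)`. -/
structure CosetDecomposition {H G : Type*} [Group H] [Group G] (f : H →* G) (C : Type*) where
  coset : G → C
  rep : C → G
  offset : G → H
  coset_rep (c : C) : coset (rep c) = c
  offset_mul (g : G) (h : H) : offset (g * f h) = offset g * h
  rep_mul_offset (g : G) : rep (coset g) * f (offset g) = g

namespace CosetDecomposition

variable {H G : Type*} [Group H] [Group G] {f : H →* G} {C : Type*}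

theorem injective (D : CosetDecomposition f C) : Function.Injective f := by
  refine (injective_iff_map_eq_one f).mpr fun h hh => ?_
  have := D.offset_mul 1 h
  rwa [hh, mul_one, left_eq_mul] at this

variable (D : CosetDecomposition f C)

theorem offset_rep (c : C) : D.offset (D.rep c) = 1 := by
  apply D.injective
  simpa [D.coset_rep] using D.rep_mul_offset (D.rep c)

theorem coset_mul (g : G) (h : H) : D.coset (g * f h) = D.coset g := by
  have : D.rep (D.coset (g * f h)) = D.rep (D.coset g) := by
    have := D.rep_mul_offset (g * f h)
    rw [D.offset_mul, map_mul, ← mul_assoc] at this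
    conv_rhs at this => rw [← D.rep_mul_offset g]
    exact mul_right_cancel (mul_right_cancel this)
  rw [← D.coset_rep (D.coset (g * f h)), this, D.coset_rep]

noncomputable def ofSubgroup (S : Subgroup G) : CosetDecomposition S.subtype (G ⧸ S) where
  coset := QuotientGroup.mk
  rep := Quotient.out
  offset g := ⟨(g : G ⧸ S).out⁻¹ * g, QuotientGroup.leftRel_apply.mp (Quotient.mk_out _)⟩
  coset_rep := QuotientGroup.out_eq'
  offset_mul g h := Subtype.ext <| by
    simp [QuotientGroup.mk_mul_of_mem g h.2, mul_assoc]
  rep_mul_offset g := mul_inv_cancel_left _ _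

def wreath (I : Type*) : CosetDecomposition (wreathMap f I) (I → C) where
  coset w i := D.coset (w.left i)
  rep c := ⟨fun i => D.rep (c i), 1⟩
  offset w := ⟨fun i => D.offset (w.left i), w.right⟩
  coset_rep c := funext fun i => D.coset_rep (c i)
  offset_mul w h := by
    ext i
    · exact D.offset_mul (w.left i) (h.left (w.right.symm i))
    · rfl
  rep_mul_offset w := by
    ext i
    · exact D.rep_mul_offset (w.left i)
    · rfl

end CosetDecomposition

section Ind

variable {k : Type*} [CommRing k] {H G : Type*} [Group H] [Group G] {f : H →* G}
  {V : Type*} [AddCommGroup V] [Module k V] {ρ : Representation k H V}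

theorem Ind.mk_mul_of_tmul (a : MonoidAlgebra k G) (h : H) (v : V) :
    (Submodule.Quotient.mk ((a * MonoidAlgebra.of k G (f h)) ⊗ₜ v) : Ind k f V ρ) =
      Submodule.Quotient.mk (a ⊗ₜ ρ h v) :=
  (Submodule.Quotient.eq _).mpr (Submodule.subset_span ⟨a, h, v, rfl⟩)

theorem Ind.linearMap_ext {M : Type*} [AddCommMonoid M] [Module k M]
    {φ ψ : Ind k f V ρ →ₗ[k] M}
    (h : ∀ g, φ ∘ₗ (indRel k f V ρ).mkQ ∘ₗ TensorProduct.mk k _ V (MonoidAlgebra.of k G g) =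
      ψ ∘ₗ (indRel k f V ρ).mkQ ∘ₗ TensorProduct.mk k _ V (MonoidAlgebra.of k G g)) :
    φ = ψ := by
  refine (LinearMap.cancel_right (Submodule.mkQ_surjective _)).mp ?_
  apply TensorProduct.ext
  exact (MonoidAlgebra.basis G k).ext h

theorem indRel_le_ker {M : Type*} [AddCommGroup M] [Module k M]
    (φ : MonoidAlgebra k G ⊗[k] V →ₗ[k] M)
    (hφ : ∀ g h v,
      φ (MonoidAlgebra.of k G (g * f h) ⊗ₜ v) = φ (MonoidAlgebra.of k G g ⊗ₜ ρ h v)) :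
    indRel k f V ρ ≤ LinearMap.ker φ := by
  refine Submodule.span_le.mpr ?_
  rintro _ ⟨a, h, v, rfl⟩
  rw [SetLike.mem_coe, LinearMap.mem_ker, map_sub, sub_eq_zero]
  induction a using MonoidAlgebra.induction_on with
  | of g => rw [← map_mul, hφ]
  | add a b ha hb => rw [add_mul, add_tmul, add_tmul, map_add, map_add, ha, hb]
  | smul r a ha => rw [smul_mul_assoc, ← smul_tmul', ← smul_tmul', map_smul, map_smul, ha]

theorem indRep_mk_tmul (g : G) (a : MonoidAlgebra k G) (v : V) :
    indRep k f V ρ g (Submodule.Quotient.mk (a ⊗ₜ v)) =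
      Submodule.Quotient.mk ((MonoidAlgebra.of k G g * a) ⊗ₜ v) := rfl

end Ind

theorem wreathRep_tprod {k : Type*} [CommRing k] {G : Type*} [Group G] {I : Type*}
    {V : Type*} [AddCommGroup V] [Module k V] (ρ : Representation k G V)
    (w : Wreath G I) (v : I → V) :
    wreathRep k I ρ w (tprod k v) = tprod k fun i => ρ (w.left i) (v (w.right.symm i)) := by
  simp [wreathRep]

namespace CosetDecomposition

variable (k : Type*) [CommRing k] {H G : Type*} [Group H] [Group G] {f : H →* G} {C : Type*}
  [DecidableEq C] (D : CosetDecomposition f C)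
  {V : Type*} [AddCommGroup V] [Module k V] (ρ : Representation k H V)

noncomputable def toDFinsupp : MonoidAlgebra k G ⊗[k] V →ₗ[k] Π₀ _ : C, V :=
  TensorProduct.lift <| (MonoidAlgebra.basis G k).constr k fun g =>
    DFinsupp.lsingle (D.coset g) ∘ₗ ρ (D.offset g)

theorem toDFinsupp_of_tmul (g : G) (v : V) :
    D.toDFinsupp k ρ (MonoidAlgebra.of k G g ⊗ₜ v) =
      DFinsupp.single (D.coset g) (ρ (D.offset g) v) := by
  simp [toDFinsupp, ← MonoidAlgebra.basis_apply, Module.Basis.constr_basis]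

noncomputable def indEquiv : Ind k f V ρ ≃ₗ[k] Π₀ _ : C, V :=
  LinearEquiv.ofLinearMap
    ((indRel k f V ρ).liftQ (D.toDFinsupp k ρ) <| indRel_le_ker _ fun g h v => by
      rw [toDFinsupp_of_tmul, toDFinsupp_of_tmul, D.coset_mul, D.offset_mul, map_mul,
        Module.End.mul_apply])
    (DFinsupp.lsum k fun c =>
      (indRel k f V ρ).mkQ ∘ₗ TensorProduct.mk k _ V (MonoidAlgebra.of k G (D.rep c)))
    (by
      ext c v : 2
      simp only [LinearMap.comp_apply, DFinsupp.lsingle_apply, DFinsupp.lsum_single]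
      rw [Submodule.mkQ_apply, Submodule.liftQ_apply, TensorProduct.mk_apply, toDFinsupp_of_tmul,
        D.coset_rep, D.offset_rep, map_one]
      rfl)
    (Ind.linearMap_ext fun g => by
      ext v
      simp only [LinearMap.comp_apply, Submodule.mkQ_apply, TensorProduct.mk_apply,
        Submodule.liftQ_apply, toDFinsupp_of_tmul, DFinsupp.lsum_single, LinearMap.id_apply]
      conv_rhs => rw [← D.rep_mul_offset g, map_mul, Ind.mk_mul_of_tmul])

theorem indEquiv_mk_of_tmul (g : G) (v : V) :
    D.indEquiv k ρ (Submodule.Quotient.mk (MonoidAlgebra.of k G g ⊗ₜ v)) =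
      DFinsupp.single (D.coset g) (ρ (D.offset g) v) :=
  D.toDFinsupp_of_tmul k ρ g v

variable (I : Type*) [Fintype I] [DecidableEq I]

noncomputable def indTensorPowerEquiv :
    Ind k (wreathMap f I) (⨂[k] _ : I, V) (wreathRep k I ρ) ≃ₗ[k] ⨂[k] _ : I, Ind k f V ρ :=
  (D.wreath I).indEquiv k (wreathRep k I ρ) ≪≫ₗ
    ((PiTensorProduct.congr fun _ => D.indEquiv k ρ) ≪≫ₗ ofDFinsuppEquiv).symm

theorem indTensorPowerEquiv_mk_of_tmul_tprod (w : Wreath G I) (v : I → V) :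
    D.indTensorPowerEquiv k ρ I
        (Submodule.Quotient.mk (MonoidAlgebra.of k _ w ⊗ₜ tprod k v)) =
      wreathRep k I (indRep k f V ρ) w
        (tprod k fun i => Submodule.Quotient.mk ((1 : MonoidAlgebra k G) ⊗ₜ v i)) := by
  rw [indTensorPowerEquiv, LinearEquiv.trans_apply, LinearEquiv.symm_apply_eq,
    indEquiv_mk_of_tmul, wreathRep_tprod, wreathRep_tprod, LinearEquiv.trans_apply, congr_tprod]
  simp only [indRep_mk_tmul, mul_one, indEquiv_mk_of_tmul]
  rw [ofDFinsuppEquiv_tprod_single]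
  rfl

theorem indTensorPowerEquiv_indRep (w : Wreath G I)
    (x : Ind k (wreathMap f I) (⨂[k] _ : I, V) (wreathRep k I ρ)) :
    D.indTensorPowerEquiv k ρ I (indRep k (wreathMap f I) _ (wreathRep k I ρ) w x) =
      wreathRep k I (indRep k f V ρ) w (D.indTensorPowerEquiv k ρ I x) := by
  have : (D.indTensorPowerEquiv k ρ I).toLinearMap ∘ₗ
        indRep k (wreathMap f I) _ (wreathRep k I ρ) w =
      wreathRep k I (indRep k f V ρ) w ∘ₗ (D.indTensorPowerEquiv k ρ I).toLinearMap := by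
    apply Ind.linearMap_ext
    intro w'
    apply PiTensorProduct.ext
    apply MultilinearMap.ext
    intro v
    simp only [LinearMap.compMultilinearMap_apply, LinearMap.comp_apply, Submodule.mkQ_apply,
      TensorProduct.mk_apply, LinearEquiv.coe_coe]
    rw [indRep_mk_tmul, ← map_mul, indTensorPowerEquiv_mk_of_tmul_tprod,
      indTensorPowerEquiv_mk_of_tmul_tprod, map_mul, Module.End.mul_apply]
  exact LinearMap.congr_fun this x

end CosetDecomposition

theorem statement7_general (k : Type*) [CommRing k] (G : Type*) [Group G]
    (S : Subgroup G) (V : Type*) [AddCommGroup V] [Module k V]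
    (ρ : Representation k S V) (n : ℕ) :
    ∃ Φ : Ind k (wreathMap S.subtype (Fin n)) (⨂[k] _i : Fin n, V) (wreathRep k (Fin n) ρ)
        ≃ₗ[k] ⨂[k] _i : Fin n, Ind k S.subtype V ρ,
      ∀ (w : Wreath G (Fin n))
        (x : Ind k (wreathMap S.subtype (Fin n)) (⨂[k] _i : Fin n, V) (wreathRep k (Fin n) ρ)),
        Φ (indRep k (wreathMap S.subtype (Fin n)) (⨂[k] _i : Fin n, V)
            (wreathRep k (Fin n) ρ) w x) =
          wreathRep k (Fin n) (indRep k S.subtype V ρ) w (Φ x) := by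
  classical
  exact ⟨_, (CosetDecomposition.ofSubgroup S).indTensorPowerEquiv_indRep k ρ (Fin n)⟩

theorem statement7 (k : Type*) [CommRing k] (G : Type*) [Group G] [Finite G]
    (S : Subgroup G) (V : Type*) [AddCommGroup V] [Module k V]
    (ρ : Representation k S V) (n : ℕ) :
    ∃ Φ : Ind k (wreathMap S.subtype (Fin n)) (⨂[k] _i : Fin n, V) (wreathRep k (Fin n) ρ)
        ≃ₗ[k] ⨂[k] _i : Fin n, Ind k S.subtype V ρ,
      ∀ (w : Wreath G (Fin n))
        (x : Ind k (wreathMap S.subtype (Fin n)) (⨂[k] _i : Fin n, V) (wreathRep k (Fin n) ρ)),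
        Φ (indRep k (wreathMap S.subtype (Fin n)) (⨂[k] _i : Fin n, V)
            (wreathRep k (Fin n) ρ) w x) =
          wreathRep k (Fin n) (indRep k S.subtype V ρ) w (Φ x) :=
  statement7_general k G S V ρ n
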